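/- Suppose the pair (C,p) is welfare-optimal, i.e., W(M(C,p)) ≥ W(M(C',p')) for every integer C' ≥ 1 and every p' ≥ 0, and suppose C is even. Let q = Pr_{V∼F}[ d_V(p) ≥ C ]. Then the safe-price auction with cap C/2 satisfies W(M(C/2)) ≥ (q/2)·(1C). -/

import Mathlib

open MeasureTheory ProbabilityTheory

noncomputable section

/-- The marginal value of the `j`-th license under the curve `V`. -/
def marg (V : ℕ → ℝ) (j : ℕ) : ℝ := V j - V (j - 1)

/-- A valuation curve: `V 0 = 0`, nondecreasing, nonincreasing marginal values,
and only finitely many nonzero marginal values. -/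
def IsValuation (V : ℕ → ℝ) : Prop :=
  V 0 = 0 ∧ Monotone V ∧ (∀ j : ℕ, 1 ≤ j → marg V (j + 1) ≤ marg V j) ∧
    ∃ N : ℕ, ∀ j : ℕ, N ≤ j → marg V j = 0

/-- A social cost function: `Q 0 = 0`, nondecreasing, and (discretely) convex. -/
def IsCost (Q : ℕ → ℝ) : Prop :=
  Q 0 = 0 ∧ Monotone Q ∧ ∀ x : ℕ, 1 ≤ x → Q x - Q (x - 1) ≤ Q (x + 1) - Q x

/-- The demand of a valuation curve at price `p`:
`sup { j ≥ 1 : marg V j ≥ p } ∈ ℕ ∪ {∞}` (with `sup ∅ = 0`). -/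
def dem (V : ℕ → ℝ) (p : ℝ) : ℕ∞ :=
  sSup {j : ℕ∞ | ∃ k : ℕ, j = (k : ℕ∞) ∧ 1 ≤ k ∧ p ≤ marg V k}

/-- Number of licenses sold to curve `V` under cap `C` (possibly `∞`) and price floor `p`. -/
def sold (C : ℕ∞) (p : ℝ) (V : ℕ → ℝ) : ℕ := (min C (dem V p)).toNat

/-- The safe price for cap `C`: the average social cost `Q C / C` per license. -/
def safeP (Q : ℕ → ℝ) (C : ℕ) : ℝ := Q C / C

/-- Truth-telling expected welfare of the no-ceiling cap-and-price auction `M(C,p)`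
for a distribution `F` over (combined) valuation curves. -/
def Wfl (F : Measure (ℕ → ℝ)) (Q : ℕ → ℝ) (C : ℕ∞) (p : ℝ) : ℝ :=
  ∫ V, (V (sold C p V) - Q (sold C p V)) ∂F

/-- Number of licenses sold under cap `C`, price floor `p`, and price ceiling `pbar`. -/
def xceil (C : ℕ) (p pbar : ℝ) (V : ℕ → ℝ) : ℕ :=
  if (C : ℕ∞) ≤ dem V pbar then (dem V pbar).toNat else sold (C : ℕ∞) p V

/-- Truth-telling expected welfare of the cap-and-price auction `M(C,p,pbar)`. -/
def Wceil (F : Measure (ℕ → ℝ)) (Q : ℕ → ℝ) (C : ℕ) (p pbar : ℝ) : ℝ :=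
  ∫ V, (V (xceil C p pbar V) - Q (xceil C p pbar V)) ∂F

/-- The combined valuation curve of a profile of valuation curves. -/
def comb {n : ℕ} (Vp : Fin n → ℕ → ℝ) (x : ℕ) : ℝ :=
  sSup {s : ℝ | ∃ y : Fin n → ℕ, (∑ i, y i) = x ∧ s = ∑ i, Vp i (y i)}

open Classical in
/-- Product of a family of probability measures (0 if the family fails to consist
of probability measures). -/
def piProb {ι : Type*} [Fintype ι] {α : ι → Type*} [∀ i, MeasurableSpace (α i)]
    (μ : ∀ i, Measure (α i)) : Measure (∀ i, α i) :=
  if h : ∀ i, IsProbabilityMeasure (μ i) then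
    haveI := h
    Measure.pi μ
  else 0

/-- Truth-telling expected welfare of `M(C,p)` for independent firms with
valuation distributions `F i`, computed via the combined valuation curve. -/
def Wcomb {n : ℕ} (F : Fin n → Measure (ℕ → ℝ)) (Q : ℕ → ℝ) (C : ℕ∞) (p : ℝ) : ℝ :=
  ∫ Vp, (comb Vp (sold C p (comb Vp)) - Q (sold C p (comb Vp))) ∂(piProb F)

/-- Truth-telling expected welfare of `M(C,p,pbar)` for independent firms. -/
def WceilComb {n : ℕ} (F : Fin n → Measure (ℕ → ℝ)) (Q : ℕ → ℝ) (C : ℕ) (p pbar : ℝ) : ℝ :=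
  ∫ Vp, (comb Vp (xceil C p pbar (comb Vp)) - Q (xceil C p pbar (comb Vp))) ∂(piProb F)

/-- `W^{(1)}`: the expected optimal welfare from allocating licenses to a single firm. -/
def W1 {n : ℕ} (F : Fin n → Measure (ℕ → ℝ)) (Q : ℕ → ℝ) : ℝ :=
  ∫ Vp, sSup {w : ℝ | ∃ (i : Fin n) (x : ℕ), w = Vp i x - Q x} ∂(piProb F)

/-- The per-license price in the uniform-price auction with cap `C` and floor `pf`,
given a bid profile `b`. -/
def priceOf {n : ℕ} (C : ℕ) (pf : ℝ) (b : Fin n → ℕ → ℝ) : ℝ :=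
  if (∑ i, dem (b i) pf) < (C : ℕ∞) then pf else comb b C - comb b (C - 1)

/-- A (measurable) tie-breaking allocation rule for the uniform-price auction with
cap `C` and price floor `pf`. -/
def IsAllocRule {n : ℕ} (C : ℕ) (pf : ℝ) (alloc : (Fin n → ℕ → ℝ) → Fin n → ℕ) : Prop :=
  Measurable alloc ∧
    ∀ b : Fin n → ℕ → ℝ, (∀ i, IsValuation (b i)) →
      (((∑ i, dem (b i) pf) < (C : ℕ∞)) → ∀ i, alloc b i = (dem (b i) pf).toNat) ∧
      (((C : ℕ∞) ≤ ∑ i, dem (b i) pf) →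
        (∑ i, alloc b i) = C ∧
          ∀ y : Fin n → ℕ, (∑ i, y i) = C → (∑ i, b i (y i)) ≤ ∑ i, b i (alloc b i))

/-- The strategy `σi` never overbids: with probability one the bid is a valuation
curve pointwise below the true valuation. -/
def NoOverbid (σi : Kernel (ℕ → ℝ) (ℕ → ℝ)) : Prop :=
  ∀ V : ℕ → ℝ, IsValuation V → σi V {B | IsValuation B ∧ ∀ x, B x ≤ V x} = 1

/-- Expected welfare when the firms play the (randomized) strategy profile `σ`. -/
def EqWelfare {n : ℕ} (F : Fin n → Measure (ℕ → ℝ)) (σ : Fin n → Kernel (ℕ → ℝ) (ℕ → ℝ))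
    (alloc : (Fin n → ℕ → ℝ) → Fin n → ℕ) (Q : ℕ → ℝ) : ℝ :=
  ∫ Vp, (∫ b, ((∑ i, Vp i (alloc b i)) - Q (∑ i, alloc b i))
      ∂(piProb fun j => σ j (Vp j))) ∂(piProb F)

/-- Expected utility of firm `i` with valuation `Vi` when every firm plays `σ`. -/
def EUeq {n : ℕ} (F : Fin n → Measure (ℕ → ℝ)) (σ : Fin n → Kernel (ℕ → ℝ) (ℕ → ℝ))
    (alloc : (Fin n → ℕ → ℝ) → Fin n → ℕ) (C : ℕ) (pf : ℝ) (i : Fin n) (Vi : ℕ → ℝ) : ℝ :=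
  ∫ Vp, (∫ b, (Vi (alloc b i) - priceOf C pf b * (alloc b i : ℝ))
      ∂(piProb fun j => σ j (Function.update Vp i Vi j))) ∂(piProb F)

/-- Expected utility of firm `i` with valuation `Vi` deviating to the fixed bid `Bt`
while the others play `σ`. -/
def EUdev {n : ℕ} (F : Fin n → Measure (ℕ → ℝ)) (σ : Fin n → Kernel (ℕ → ℝ) (ℕ → ℝ))
    (alloc : (Fin n → ℕ → ℝ) → Fin n → ℕ) (C : ℕ) (pf : ℝ) (i : Fin n) (Vi Bt : ℕ → ℝ) : ℝ :=
  ∫ Vp, (∫ b, (Vi (alloc b i) - priceOf C pf b * (alloc b i : ℝ))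
      ∂(piProb fun j => if j = i then Measure.dirac Bt else σ j (Vp j))) ∂(piProb F)

/-- Bayes–Nash equilibrium of the uniform-price auction with cap `C` and floor `pf`. -/
def IsBNE {n : ℕ} (F : Fin n → Measure (ℕ → ℝ)) (σ : Fin n → Kernel (ℕ → ℝ) (ℕ → ℝ))
    (alloc : (Fin n → ℕ → ℝ) → Fin n → ℕ) (C : ℕ) (pf : ℝ) : Prop :=
  ∀ (i : Fin n) (Vi : ℕ → ℝ), IsValuation Vi → ∀ Bt : ℕ → ℝ, IsValuation Bt →
    EUdev F σ alloc C pf i Vi Bt ≤ EUeq F σ alloc C pf i Vi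

/-- `θ_V = min( d_V(p), d_V(P(C)) )`, as a natural number. -/
def thetaN (Q : ℕ → ℝ) (C : ℕ) (p : ℝ) (V : ℕ → ℝ) : ℕ :=
  (min (dem V p) (dem V (safeP Q C))).toNat

/-!
Write `C = 2K` and `G = Q(2K) - 2Q(K) ≥ 0`. A license allocated below the safe price `P(2K)` is
worth less than the average cost `P(2K)`, so by midpoint convexity `2Q(K) ≤ Q(n) + Q(2K - n)` the
welfare of any `n ≤ 2K` such licenses is at most `G`; hence `(1C) ≤ G`.

Pointwise in `V`, the welfare lost by lowering the cap from `2K` to `K` at floor `p`, plus `G` on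
the event `d_V(p) ≥ 2K`, is at most the welfare of `M(K)`: by concavity of `V` the `e ≤ K`
licenses beyond the `K`-th are worth at most `V(e)`, by convexity of `Q` they cost at least
`Q(K) - Q(K - e) ≥ Q(K) - (K - e)·P(K)`, and `M(K)` sells a quantity maximising `V(j) - j·P(K)`
over `j ≤ K` at a cost of at most `j·P(K)`. Integrating and using the optimality of `(2K, p)`
against `(K, p)` gives `q·G ≤ W(M(K))`, whence `(q/2)·(1C) ≤ W(M(K))`.
-/

open MeasureTheory

section Increments

variable {f : ℕ → ℝ}

theorem sub_le_mul_of_increment_le {a b : ℕ} (hab : a ≤ b) {c : ℝ}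
    (h : ∀ i, a ≤ i → i < b → f (i + 1) - f i ≤ c) : f b - f a ≤ ((b : ℝ) - a) * c := by
  induction b, hab using Nat.le_induction with
  | base => simp
  | succ b hab ih =>
    have hlast := h b hab (by omega)
    have hrest := ih fun i hi hib => h i hi (by omega)
    push_cast
    linarith

theorem mul_le_sub_of_le_increment {a b : ℕ} (hab : a ≤ b) {c : ℝ}
    (h : ∀ i, a ≤ i → i < b → c ≤ f (i + 1) - f i) : ((b : ℝ) - a) * c ≤ f b - f a := by
  have := sub_le_mul_of_increment_le (f := -f) hab (c := -c) fun i hi hib => by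
    simp only [Pi.neg_apply]
    linarith [h i hi hib]
  simp only [Pi.neg_apply] at this
  linarith

theorem sub_le_sub_of_monotone_increment (hf : Monotone fun i => f (i + 1) - f i) {a b : ℕ}
    (hab : a ≤ b) (e : ℕ) : f (a + e) - f a ≤ f (b + e) - f b := by
  induction e with
  | zero => simp
  | succ e ih =>
    have := hf (show a + e ≤ b + e by omega)
    simp only [← add_assoc] at this ⊢
    linarith

theorem sub_le_sub_of_antitone_increment (hf : Antitone fun i => f (i + 1) - f i) {a b : ℕ}
    (hab : a ≤ b) (e : ℕ) : f (b + e) - f b ≤ f (a + e) - f a := by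
  have := sub_le_sub_of_monotone_increment (f := -f) (fun i j hij => by
    simp only [Pi.neg_apply]
    linarith [hf hij]) hab e
  simp only [Pi.neg_apply] at this
  linarith

end Increments

section Cost

variable {Q : ℕ → ℝ}

theorem IsCost.monotone_increment (hQ : IsCost Q) : Monotone fun i => Q (i + 1) - Q i :=
  monotone_nat_of_le_succ fun i => by simpa using hQ.2.2 (i + 1) (by omega)

theorem safeP_mul {n : ℕ} (hn : n ≠ 0) : (n : ℝ) * safeP Q n = Q n :=
  mul_div_cancel₀ _ (Nat.cast_ne_zero.2 hn)

theorem IsCost.le_mul_safeP (hQ : IsCost Q) {m n : ℕ} (hmn : m ≤ n) (hn : n ≠ 0) :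
    Q m ≤ m * safeP Q n := by
  set c := Q (m + 1) - Q m
  have hlow : Q m - Q 0 ≤ ((m : ℝ) - (0 : ℕ)) * c :=
    sub_le_mul_of_increment_le (Nat.zero_le m) fun i _ hi => hQ.monotone_increment hi.le
  have hhigh : ((n : ℝ) - m) * c ≤ Q n - Q m :=
    mul_le_sub_of_le_increment hmn fun i hi _ => hQ.monotone_increment hi
  have hnm : (0 : ℝ) ≤ n - m := sub_nonneg.2 (Nat.cast_le.2 hmn)
  rw [hQ.1, Nat.cast_zero, sub_zero, sub_zero] at hlow
  rw [safeP, mul_div_assoc', le_div_iff₀ (Nat.cast_pos.2 (Nat.pos_of_ne_zero hn))]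
  nlinarith [mul_le_mul_of_nonneg_left hhigh (Nat.cast_nonneg m),
    mul_le_mul_of_nonneg_left hlow hnm]

theorem IsCost.two_mul_le_add (hQ : IsCost Q) {a b K : ℕ} (hab : a + b = 2 * K) :
    2 * Q K ≤ Q a + Q b := by
  wlog h : a ≤ K generalizing a b
  · linarith [this (a := b) (b := a) (by omega) (by omega)]
  have := sub_le_sub_of_monotone_increment hQ.monotone_increment h (K - a)
  rw [Nat.add_sub_cancel' h, show K + (K - a) = b by omega] at this
  linarith

theorem IsCost.mul_safeP_sub_le (hQ : IsCost Q) {K n : ℕ} (hK : K ≠ 0) (hn : n ≤ 2 * K) :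
    n * safeP Q (2 * K) - Q n ≤ Q (2 * K) - 2 * Q K := by
  have hrest := hQ.le_mul_safeP (Nat.sub_le (2 * K) n) (by omega)
  have hmid := hQ.two_mul_le_add (Nat.add_sub_cancel' hn)
  have htot := safeP_mul (Q := Q) (n := 2 * K) (by omega)
  rw [Nat.cast_sub hn] at hrest
  linarith

end Cost

section Demand

variable {V : ℕ → ℝ} {p : ℝ}

theorem le_dem_iff_exists {k : ℕ} (hk : 1 ≤ k) :
    (k : ℕ∞) ≤ dem V p ↔ ∃ j, k ≤ j ∧ p ≤ marg V j := by
  obtain ⟨k, rfl⟩ : ∃ m, k = m + 1 := ⟨k - 1, by omega⟩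
  rw [Nat.cast_add_one, ENat.add_one_le_iff (ENat.natCast_ne_top k), dem, lt_sSup_iff]
  constructor
  · rintro ⟨_, ⟨j, rfl, -, hj⟩, hkj⟩
    exact ⟨j, by exact_mod_cast hkj, hj⟩
  · rintro ⟨j, hkj, hj⟩
    exact ⟨j, ⟨j, rfl, by omega, hj⟩, by exact_mod_cast hkj⟩

theorem marg_lt_of_dem_lt {k : ℕ} (hk : 1 ≤ k) (h : dem V p < k) : marg V k < p :=
  lt_of_not_ge fun hp => h.not_ge (le_sSup ⟨k, rfl, hk, hp⟩)

theorem sub_le_mul_of_dem_le {a b : ℕ} (h : dem V p ≤ a) (hab : a ≤ b) :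
    V b - V a ≤ ((b : ℝ) - a) * p :=
  sub_le_mul_of_increment_le hab fun i hi _ => by
    simpa [marg] using (marg_lt_of_dem_lt (V := V) (Nat.le_add_left 1 i)
      (h.trans_lt (by exact_mod_cast Nat.lt_succ_of_le hi))).le

theorem IsValuation.antitone_increment (hV : IsValuation V) : Antitone fun i => V (i + 1) - V i :=
  antitone_nat_of_succ_le fun i => by simpa [marg] using hV.2.2.1 (i + 1) (by omega)

theorem IsValuation.le_dem_iff (hV : IsValuation V) {k : ℕ} (hk : 1 ≤ k) :
    (k : ℕ∞) ≤ dem V p ↔ p ≤ marg V k := by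
  refine (le_dem_iff_exists hk).trans ⟨fun ⟨j, hkj, hj⟩ => hj.trans ?_, fun h => ⟨k, le_rfl, h⟩⟩
  have := hV.antitone_increment (show k - 1 ≤ j - 1 by omega)
  simpa [marg, Nat.sub_add_cancel hk, Nat.sub_add_cancel (hk.trans hkj)] using this

theorem coe_sold (N : ℕ) (p : ℝ) (V : ℕ → ℝ) : (sold N p V : ℕ∞) = min (N : ℕ∞) (dem V p) :=
  ENat.natCast_toNat (ne_top_of_le_ne_top (ENat.natCast_ne_top N) (min_le_left _ _))

theorem sold_le (N : ℕ) (p : ℝ) (V : ℕ → ℝ) : sold N p V ≤ N := by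
  exact_mod_cast (coe_sold N p V).trans_le (min_le_left _ _)

theorem sold_eq_of_le {N : ℕ} (h : (N : ℕ∞) ≤ dem V p) : sold N p V = N := by
  exact_mod_cast (coe_sold N p V).trans (min_eq_left h)

theorem dem_lt_of_sold_lt {N k : ℕ} (hk : sold N p V < k) (hkN : k ≤ N) : dem V p < k := by
  have : min (N : ℕ∞) (dem V p) < k := coe_sold N p V ▸ (by exact_mod_cast hk)
  exact (min_lt_iff.1 this).resolve_left (by exact_mod_cast hkN.not_gt)

theorem IsValuation.sub_mul_le_sold (hV : IsValuation V) {N j : ℕ} (hj : j ≤ N) :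
    V j - j * p ≤ V (sold N p V) - sold N p V * p := by
  rcases le_total j (sold N p V) with h | h
  · have := mul_le_sub_of_le_increment h fun i _ hi => by
      have hdem : ((i + 1 : ℕ) : ℕ∞) ≤ dem V p :=
        (Nat.cast_le.2 hi).trans ((coe_sold N p V).trans_le (min_le_right _ _))
      simpa [marg] using (hV.le_dem_iff (Nat.le_add_left 1 i)).1 hdem
    linarith
  · have := sub_le_mul_of_increment_le (f := V) h fun i hi hij => by
      simpa [marg] using (marg_lt_of_dem_lt (Nat.le_add_left 1 i)
        (dem_lt_of_sold_lt (Nat.lt_succ_of_le hi) (by omega))).le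
    linarith

end Demand

/-- `Wfl F Q N p` is the `F`-expectation of `welfare Q N p`. -/
def welfare (Q : ℕ → ℝ) (N : ℕ∞) (p : ℝ) (V : ℕ → ℝ) : ℝ :=
  V (sold N p V) - Q (sold N p V)

section Welfare

variable {V Q : ℕ → ℝ}

theorem IsValuation.sub_mul_safeP_le_welfare (hV : IsValuation V) (hQ : IsCost Q) {K j : ℕ}
    (hK : K ≠ 0) (hj : j ≤ K) : V j - j * safeP Q K ≤ welfare Q K (safeP Q K) V := by
  have hsurplus := hV.sub_mul_le_sold (p := safeP Q K) hj
  have hcost := hQ.le_mul_safeP (sold_le K (safeP Q K) V) hK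
  unfold welfare
  linarith

theorem IsValuation.welfare_safeP_nonneg (hV : IsValuation V) (hQ : IsCost Q) {K : ℕ}
    (hK : K ≠ 0) : 0 ≤ welfare Q K (safeP Q K) V := by
  simpa [hV.1] using hV.sub_mul_safeP_le_welfare hQ hK (Nat.zero_le K)

theorem welfare_below_safeP_le (hQ : IsCost Q) {K : ℕ} (hK : K ≠ 0) {p : ℝ}
    (h : dem V p < ((2 * K : ℕ) : ℕ∞)) :
    V (dem V p).toNat - V (thetaN Q (2 * K) p V)
      - Q ((dem V p).toNat - thetaN Q (2 * K) p V) ≤ Q (2 * K) - 2 * Q K := by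
  set d := (dem V p).toNat
  set θ := thetaN Q (2 * K) p V
  have hd : (d : ℕ∞) = dem V p := ENat.natCast_toNat h.ne_top
  have hθd : θ ≤ d := ENat.toNat_le_toNat (min_le_left _ _) h.ne_top
  have hdK : d ≤ 2 * K := by exact_mod_cast (hd.trans_lt h).le
  have hvalue : V d - V θ ≤ ((d : ℝ) - θ) * safeP Q (2 * K) := by
    rcases le_total (dem V p) (dem V (safeP Q (2 * K))) with hps | hsp
    · have : θ = d := by
        show ENat.toNat (min _ _) = _
        rw [min_eq_left hps]
      simp [this]
    · refine sub_le_mul_of_dem_le (le_of_eq ?_) hθd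
      show _ = ((ENat.toNat (min _ _) : ℕ) : ℕ∞)
      rw [min_eq_right hsp, ENat.natCast_toNat (ne_top_of_le_ne_top h.ne_top hsp)]
  have hcost := hQ.mul_safeP_sub_le hK (n := d - θ) (by omega)
  rw [Nat.cast_sub hθd] at hcost
  linarith

theorem IsValuation.welfare_sub_welfare_add_le (hV : IsValuation V) (hQ : IsCost Q) {K : ℕ}
    (hK : K ≠ 0) (p : ℝ) :
    welfare Q ((2 * K : ℕ) : ℕ∞) p V - welfare Q K p V
        + (if ((2 * K : ℕ) : ℕ∞) ≤ dem V p then Q (2 * K) - 2 * Q K else 0)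
      ≤ welfare Q K (safeP Q K) V := by
  rcases le_or_gt (dem V p) K with hd | hd
  · have hsame : sold ((2 * K : ℕ) : ℕ∞) p V = sold K p V := by
      have h2K : (K : ℕ∞) ≤ ((2 * K : ℕ) : ℕ∞) := by exact_mod_cast (by omega : K ≤ 2 * K)
      have : (sold ((2 * K : ℕ) : ℕ∞) p V : ℕ∞) = sold K p V := by
        rw [coe_sold, coe_sold, min_eq_right hd, min_eq_right (hd.trans h2K)]
      exact_mod_cast this
    have hlow : ¬ ((2 * K : ℕ) : ℕ∞) ≤ dem V p := fun h =>
      absurd (Nat.cast_le.1 (h.trans hd)) (by omega)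
    have := hV.welfare_safeP_nonneg hQ hK
    simp only [welfare, hsame, if_neg hlow] at this ⊢
    linarith
  set j := sold ((2 * K : ℕ) : ℕ∞) p V
  have hjK : K ≤ j := by
    have : (K : ℕ∞) ≤ min ((2 * K : ℕ) : ℕ∞) (dem V p) :=
      le_min (by exact_mod_cast (by omega : K ≤ 2 * K)) hd.le
    exact_mod_cast this.trans_eq (coe_sold _ p V).symm
  have hj2K : j ≤ 2 * K := sold_le _ p V
  have hcap : (if ((2 * K : ℕ) : ℕ∞) ≤ dem V p then Q (2 * K) - 2 * Q K else 0)
      ≤ Q j + Q (2 * K - j) - 2 * Q K := by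
    split_ifs with h
    · simp [j, sold_eq_of_le h, hQ.1]
    · linarith [hQ.two_mul_le_add (Nat.add_sub_cancel' hj2K)]
  have hvalue : V j - V K ≤ V (j - K) := by
    have := sub_le_sub_of_antitone_increment hV.antitone_increment (Nat.zero_le K) (j - K)
    rwa [Nat.add_sub_cancel' hjK, zero_add, hV.1, sub_zero] at this
  have hrest := hQ.le_mul_safeP (show 2 * K - j ≤ K by omega) hK
  have hsurplus := hV.sub_mul_safeP_le_welfare hQ hK (show j - K ≤ K by omega)
  have hK' := safeP_mul (Q := Q) hK
  rw [Nat.cast_sub hj2K] at hrest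
  rw [Nat.cast_sub hjK] at hsurplus
  simp only [welfare, sold_eq_of_le hd.le] at hsurplus ⊢
  push_cast at hrest
  linarith

end Welfare

section Measurability

theorem ENat.measurable_of_measurableSet_le {α : Type*} [MeasurableSpace α] {f : α → ℕ∞}
    (h : ∀ n : ℕ, MeasurableSet {a | (n : ℕ∞) ≤ f a}) : Measurable f := by
  refine ENat.measurable_iff.2 fun n => ?_
  convert (h n).diff (h (n + 1)) using 1
  ext a
  simp only [Set.mem_preimage, Set.mem_singleton_iff, Set.mem_sdiff, Set.mem_ofPred_eq, not_le]
  generalize f a = x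
  induction x using ENat.recTopCoe with
  | top => simp
  | coe m =>
    rw [Nat.cast_inj, Nat.cast_le, Nat.cast_lt]
    omega

theorem measurableSet_le_dem (k : ℕ) (p : ℝ) :
    MeasurableSet {V : ℕ → ℝ | (k : ℕ∞) ≤ dem V p} := by
  rcases Nat.eq_zero_or_pos k with rfl | hk
  · simp
  · simp_rw [le_dem_iff_exists hk, marg]
    measurability

theorem measurable_dem (p : ℝ) : Measurable fun V : ℕ → ℝ => dem V p :=
  ENat.measurable_of_measurableSet_le fun n => measurableSet_le_dem n p

theorem measurable_sold (N : ℕ∞) (p : ℝ) : Measurable (sold N p) :=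
  (measurable_of_countable fun x : ℕ∞ => (min N x).toNat).comp (measurable_dem p)

theorem measurableSet_isValuation : MeasurableSet {V : ℕ → ℝ | IsValuation V} := by
  unfold IsValuation marg Monotone
  measurability

end Measurability

section Integrability

variable {α : Type*} [MeasurableSpace α] {μ : Measure α}

theorem integrable_comp_of_le {h : ℕ → α → ℝ} (hh : ∀ k, Integrable (h k) μ) {g : α → ℕ}
    (hg : Measurable g) {B : ℕ} (hB : ∀ a, g a ≤ B) : Integrable (fun a => h (g a) a) μ := by
  have hsum : (fun a => h (g a) a)
      = fun a => ∑ k ∈ Finset.range (B + 1), {a | g a = k}.indicator (h k) a := by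
    funext a
    rw [Finset.sum_eq_single_of_mem (g a) (Finset.mem_range.2 (Nat.lt_succ_of_le (hB a)))
      fun k _ hk => Set.indicator_of_notMem (fun hga => hk hga.symm) _]
    simp
  rw [hsum]
  exact integrable_finsetSum _ fun k _ => (hh k).indicator (hg (measurableSet_singleton k))

/-- No integrability is needed: otherwise the integral is the junk value `0 ≤ c`. -/
theorem integral_le_of_ae_le_const [IsProbabilityMeasure μ] {f : α → ℝ} {c : ℝ} (hc : 0 ≤ c)
    (h : ∀ᵐ a ∂μ, f a ≤ c) : ∫ a, f a ∂μ ≤ c := by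
  by_cases hf : Integrable f μ
  · simpa using integral_mono_ae hf (integrable_const c) h
  · rw [integral_undef hf]
    exact hc

theorem integrable_welfare {F : Measure (ℕ → ℝ)} [IsFiniteMeasure F]
    (hint : ∀ x : ℕ, Integrable (fun V : ℕ → ℝ => V x) F) (Q : ℕ → ℝ) (N : ℕ) (p : ℝ) :
    Integrable (welfare Q N p) F :=
  integrable_comp_of_le (h := fun k V => V k - Q k) (fun k => (hint k).sub (integrable_const _))
    (measurable_sold N p) (sold_le N p)

end Integrability

theorem Wfl_sub_Wfl_add_le {F : Measure (ℕ → ℝ)} [IsProbabilityMeasure F]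
    (hval : ∀ᵐ V ∂F, IsValuation V) (hint : ∀ x : ℕ, Integrable (fun V : ℕ → ℝ => V x) F)
    {Q : ℕ → ℝ} (hQ : IsCost Q) {K : ℕ} (hK : K ≠ 0) (p : ℝ) :
    Wfl F Q ((2 * K : ℕ) : ℕ∞) p - Wfl F Q K p
        + (F {V | ((2 * K : ℕ) : ℕ∞) ≤ dem V p}).toReal * (Q (2 * K) - 2 * Q K)
      ≤ Wfl F Q K (safeP Q K) := by
  have hS := measurableSet_le_dem (2 * K) p
  have hcap2K := integrable_welfare hint Q (2 * K) p
  have hcapK := integrable_welfare hint Q K p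
  have hind := (integrable_const (μ := F) (Q (2 * K) - 2 * Q K)).indicator hS
  have hmono := integral_mono_ae ((hcap2K.sub hcapK).add hind)
    (integrable_welfare hint Q K (safeP Q K)) (hval.mono fun V hV => by
      simp only [Pi.add_apply, Pi.sub_apply, Set.indicator_apply, Set.mem_ofPred_eq]
      exact hV.welfare_sub_welfare_add_le hQ hK p)
  rwa [integral_add' (hcap2K.sub hcapK) hind, integral_sub' hcap2K hcapK,
    integral_indicator_const _ hS, smul_eq_mul, measureReal_def] at hmono
/-- if `(C,p)` is welfare-optimal and `C` is even, then
`W(M(C/2)) ≥ (q/2)·(1C)` where `q = Pr[d_V(p) ≥ C]`. -/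
theorem stmt11 (F : Measure (ℕ → ℝ)) (hprob : IsProbabilityMeasure F)
    (hval : F {V | IsValuation V} = 1)
    (hint : ∀ x : ℕ, Integrable (fun V : ℕ → ℝ => V x) F)
    (Q : ℕ → ℝ) (hQ : IsCost Q)
    (C : ℕ) (p : ℝ) (hC : 1 ≤ C) (hp : 0 ≤ p)
    (hopt : ∀ (C' : ℕ) (p' : ℝ), 1 ≤ C' → 0 ≤ p' →
      Wfl F Q (C' : ℕ∞) p' ≤ Wfl F Q (C : ℕ∞) p)
    (heven : 2 ∣ C) :
    ((F {V | (C : ℕ∞) ≤ dem V p}).toReal / 2) *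
        (∫ V, (if dem V p < (C : ℕ∞) then
            V ((dem V p).toNat) - V (thetaN Q C p V) - Q ((dem V p).toNat - thetaN Q C p V)
          else 0) ∂F)
      ≤ Wfl F Q ((C / 2 : ℕ) : ℕ∞) (safeP Q (C / 2)) := by
  have := hprob
  obtain ⟨K, rfl⟩ := heven
  have hK : K ≠ 0 := by omega
  rw [Nat.mul_div_cancel_left K two_pos]
  have hvalV : ∀ᵐ V ∂F, IsValuation V :=
    (ae_iff_measure_eq measurableSet_isValuation.nullMeasurableSet).2 (by rw [hval, measure_univ])
  have hG : 0 ≤ Q (2 * K) - 2 * Q K := by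
    linarith [hQ.two_mul_le_add (a := 2 * K) (b := 0) (K := K) (by omega), hQ.1]
  have hqG : (F {V | ((2 * K : ℕ) : ℕ∞) ≤ dem V p}).toReal * (Q (2 * K) - 2 * Q K)
      ≤ Wfl F Q K (safeP Q K) := by
    linarith [Wfl_sub_Wfl_add_le hvalV hint hQ hK p, hopt K p (by omega) hp]
  have hW : 0 ≤ Wfl F Q K (safeP Q K) :=
    integral_nonneg_of_ae (hvalV.mono fun V hV => hV.welfare_safeP_nonneg hQ hK)
  calc _ ≤ (F {V | ((2 * K : ℕ) : ℕ∞) ≤ dem V p}).toReal / 2 * (Q (2 * K) - 2 * Q K) := by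
        gcongr
        refine integral_le_of_ae_le_const hG (ae_of_all _ fun V => ?_)
        split_ifs with h
        exacts [welfare_below_safeP_le hQ hK h, hG]
    _ ≤ _ := by linarith

end
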